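/- arXiv:2405.06028 — 2 statements merged into one kernel-verified Lean document; each statement's English description precedes it below -/
import Mathlib

section
/- For each fixed t ∈ (0,1), the function r ↦ 1/(t·(-log r)) − 1/(-log(t·r)) is nonnegative and monotone increasing for r ∈ (0,1). -/
/-!
With `L = -log r` and `a = -log t`, one has `-log (t r) = L + a` and
`1/(t L) - 1/(L + a) = (a/L + 1 - t) / (t (L + a))`. For `L > 0` the numerator is nonnegative and
decreasing in `L` and the denominator positive and increasing, so the expression is nonnegative and
antitone in `L`; composing with the antitone map `r ↦ -log r` makes it monotone in `r`.
-/

open Set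

section

variable {K : Type*} [Field K] {t a L : K}

lemma one_div_mul_sub_one_div_add_eq (ht : t ≠ 0) (hL : L ≠ 0) (hLa : L + a ≠ 0) :
    1 / (t * L) - 1 / (L + a) = (a / L + 1 - t) / (t * (L + a)) := by
  field_simp
  ring

variable [LinearOrder K] [IsStrictOrderedRing K]

lemma one_div_mul_sub_one_div_add_nonneg (ht0 : 0 < t) (ht1 : t ≤ 1) (ha : 0 ≤ a) (hL : 0 < L) :
    0 ≤ 1 / (t * L) - 1 / (L + a) := by
  rw [one_div_mul_sub_one_div_add_eq ht0.ne' hL.ne' (by positivity)]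
  have : 0 ≤ a / L + 1 - t := by have := div_nonneg ha hL.le; linarith
  positivity

lemma antitoneOn_one_div_mul_sub_one_div_add (ht0 : 0 < t) (ht1 : t ≤ 1) (ha : 0 ≤ a) :
    AntitoneOn (fun L : K => 1 / (t * L) - 1 / (L + a)) (Ioi 0) := by
  intro L (hL : 0 < L) M (hM : 0 < M) hLM
  simp only
  rw [one_div_mul_sub_one_div_add_eq ht0.ne' hL.ne' (by positivity),
    one_div_mul_sub_one_div_add_eq ht0.ne' hM.ne' (by positivity)]
  have hnum : a / M ≤ a / L := div_le_div_of_nonneg_left ha hL hLM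
  refine div_le_div₀ ?_ (by linarith) (by positivity) (by gcongr)
  have := div_nonneg ha hL.le
  linarith

end

/-- For each fixed `t ∈ (0,1)`, the function
`r ↦ 1/(t·(-log r)) − 1/(-log(t·r))` is nonnegative and monotone increasing on `(0,1)`. -/
theorem stmt7 (t : ℝ) (ht : t ∈ Ioo (0:ℝ) 1) :
    (∀ r ∈ Ioo (0:ℝ) 1,
        0 ≤ 1 / (t * (-Real.log r)) - 1 / (-Real.log (t * r))) ∧
      MonotoneOn (fun r : ℝ => 1 / (t * (-Real.log r)) - 1 / (-Real.log (t * r)))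
        (Ioo (0:ℝ) 1) := by
  obtain ⟨ht0, ht1⟩ := ht
  have ha : 0 ≤ -Real.log t := neg_nonneg.2 (Real.log_nonpos ht0.le ht1.le)
  have hmaps : MapsTo (fun r : ℝ => -Real.log r) (Ioo 0 1) (Ioi 0) :=
    fun r hr => neg_pos.2 (Real.log_neg hr.1 hr.2)
  have hlog : AntitoneOn (fun r : ℝ => -Real.log r) (Ioo 0 1) :=
    (Real.strictMonoOn_log.monotoneOn.mono Ioo_subset_Ioi_self).neg
  have hsplit : EqOn ((fun L => 1 / (t * L) - 1 / (L + -Real.log t)) ∘ fun r => -Real.log r)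
      (fun r => 1 / (t * (-Real.log r)) - 1 / (-Real.log (t * r))) (Ioo 0 1) := by
    intro r hr
    simp only [Function.comp_apply, Real.log_mul ht0.ne' hr.1.ne']
    ring
  refine ⟨fun r hr => ?_, ((antitoneOn_one_div_mul_sub_one_div_add ht0 ht1.le ha).comp
    hlog hmaps).congr hsplit⟩
  exact (one_div_mul_sub_one_div_add_nonneg ht0 ht1.le ha (hmaps hr)).trans_eq (hsplit hr)
end

section
/- Let ρ ∈ (0,1), c₀ ≥ 0, and define a sequence (d_k) by d₀ = 1 and d_k = max{ω(ρ^k), ρ^{1/2} d_{k−1}} for k ≥ 1, where ω : [0,∞) → [0,∞) is nondecreasing with ∑_{j=1}^∞ ω(ρ^j) = c₀ < ∞. Then ∑_{j=1}^∞ d_j ≤ (c₀ + ρ^{1/2})/(1 − ρ^{1/2}) < ∞; in particular d_k → 0 as k → ∞. -/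
open Set Filter

/-!
Bounding the maximum by the sum gives `d (k + 1) ≤ ω (ρ ^ (k + 1)) + √ρ * d k`. Summing this
over `k < N` and bounding `∑_{k<N} d k` by `d 0 + ∑_{k<N} d (k + 1)` yields
`(1 - √ρ) ∑_{k<N} d (k + 1) ≤ c₀ + √ρ`, a bound on the partial sums of a nonnegative series.
-/

section LinearRecursiveBound

variable {s : ℝ} {a x : ℕ → ℝ}

theorem one_sub_mul_sum_range_succ_le (hs : 0 ≤ s) (hx : ∀ n, 0 ≤ x n)
    (hrec : ∀ n, x (n + 1) ≤ a n + s * x n) (N : ℕ) :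
    (1 - s) * ∑ n ∈ Finset.range N, x (n + 1) ≤ ∑ n ∈ Finset.range N, a n + s * x 0 := by
  have hshift : ∑ n ∈ Finset.range N, x n ≤ ∑ n ∈ Finset.range N, x (n + 1) + x 0 := by
    rw [← Finset.sum_range_succ']
    exact Finset.sum_le_sum_of_subset_of_nonneg (Finset.range_subset_range.2 N.le_succ)
      fun n _ _ => hx n
  have hstep : ∑ n ∈ Finset.range N, x (n + 1) ≤
      ∑ n ∈ Finset.range N, a n + s * ∑ n ∈ Finset.range N, x n := by
    rw [Finset.mul_sum, ← Finset.sum_add_distrib]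
    exact Finset.sum_le_sum fun n _ => hrec n
  nlinarith [mul_le_mul_of_nonneg_left hshift hs]

theorem summable_and_tsum_le_of_le_add_mul (hs : 0 ≤ s) (hs1 : s < 1) (ha : Summable a)
    (ha0 : ∀ n, 0 ≤ a n) (hx : ∀ n, 0 ≤ x n) (hrec : ∀ n, x (n + 1) ≤ a n + s * x n) :
    (Summable fun n => x (n + 1)) ∧ ∑' n, x (n + 1) ≤ (∑' n, a n + s * x 0) / (1 - s) := by
  have hpartial : ∀ N, ∑ n ∈ Finset.range N, x (n + 1) ≤ (∑' n, a n + s * x 0) / (1 - s) := by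
    intro N
    rw [le_div_iff₀' (sub_pos.2 hs1)]
    have := ha.sum_le_tsum (Finset.range N) fun n _ => ha0 n
    linarith [one_sub_mul_sum_range_succ_le hs hx hrec N]
  exact ⟨summable_of_sum_range_le (fun n => hx _) hpartial,
    Real.tsum_le_of_sum_range_le (fun n => hx _) hpartial⟩

end LinearRecursiveBound

theorem stmt14_general (ρ c₀ : ℝ) (hρ : ρ ∈ Ioo (0:ℝ) 1) (ω : ℝ → ℝ)
    (hnn : ∀ r ∈ Ici (0:ℝ), 0 ≤ ω r)
    (hsum : Summable fun j : ℕ => ω (ρ ^ (j + 1)))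
    (hc : ∑' j : ℕ, ω (ρ ^ (j + 1)) = c₀)
    (d : ℕ → ℝ) (hd0 : d 0 = 1)
    (hrec : ∀ k : ℕ, d (k + 1) = max (ω (ρ ^ (k + 1))) (Real.sqrt ρ * d k)) :
    (Summable fun j : ℕ => d (j + 1)) ∧
      (∑' j : ℕ, d (j + 1)) ≤ (c₀ + Real.sqrt ρ) / (1 - Real.sqrt ρ) ∧
      Tendsto d atTop (nhds 0) := by
  have hs : 0 ≤ Real.sqrt ρ := Real.sqrt_nonneg ρ
  have hs1 : Real.sqrt ρ < 1 := (Real.sqrt_lt' one_pos).2 (by simpa using hρ.2)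
  have hω : ∀ k : ℕ, 0 ≤ ω (ρ ^ (k + 1)) := fun k => hnn _ (pow_nonneg hρ.1.le _)
  have hd : ∀ k, 0 ≤ d k
    | 0 => hd0 ▸ zero_le_one
    | k + 1 => (hrec k).symm ▸ (hω k).trans (le_max_left _ _)
  have hdle : ∀ k, d (k + 1) ≤ ω (ρ ^ (k + 1)) + Real.sqrt ρ * d k := fun k =>
    (hrec k).symm ▸ max_le_add_of_nonneg (hω k) (mul_nonneg hs (hd k))
  obtain ⟨hdsum, hdtsum⟩ := summable_and_tsum_le_of_le_add_mul hs hs1 hsum hω hd hdle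
  rw [hc, hd0, mul_one] at hdtsum
  exact ⟨hdsum, hdtsum, (tendsto_add_atTop_iff_nat 1).mp hdsum.tendsto_atTop_zero⟩

/-- For `ρ ∈ (0,1)` and nondecreasing `ω ≥ 0` with `∑_{j≥1} ω(ρ^j) = c₀ < ∞`, the
sequence `d₀ = 1`, `d_k = max{ω(ρ^k), ρ^{1/2} d_{k−1}}` satisfies
`∑_{j≥1} d_j ≤ (c₀ + ρ^{1/2})/(1 − ρ^{1/2}) < ∞`; in particular `d_k → 0`. -/
theorem stmt14 (ρ c₀ : ℝ) (hρ : ρ ∈ Ioo (0:ℝ) 1) (ω : ℝ → ℝ)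
    (hnn : ∀ r ∈ Ici (0:ℝ), 0 ≤ ω r) (hm : MonotoneOn ω (Ici 0))
    (hsum : Summable fun j : ℕ => ω (ρ ^ (j + 1)))
    (hc : ∑' j : ℕ, ω (ρ ^ (j + 1)) = c₀)
    (d : ℕ → ℝ) (hd0 : d 0 = 1)
    (hrec : ∀ k : ℕ, d (k + 1) = max (ω (ρ ^ (k + 1))) (Real.sqrt ρ * d k)) :
    (Summable fun j : ℕ => d (j + 1)) ∧
      (∑' j : ℕ, d (j + 1)) ≤ (c₀ + Real.sqrt ρ) / (1 - Real.sqrt ρ) ∧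
      Tendsto d atTop (nhds 0) :=
  stmt14_general ρ c₀ hρ ω hnn hsum hc d hd0 hrec
end
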